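/- Let n ≥ 1, Σ ∈ S_n, Θ ∈ A_n. Then the complex Hermitian matrix S := Σ + (i/2)Θ is positive definite if and only if Σ is positive definite and the matrix Ξ := (1/2)·Σ^{−1/2} Θ Σ^{−1/2} has spectral (operator) norm strictly less than 1, where Σ^{−1/2} denotes the inverse of the unique positive definite symmetric square root of Σ. -/

import Mathlib

/-!
Writing `z = x + i y`, the Hermitian form of `S = Σ + (i/2)Θ` is
`z* S z = xᵀΣx + yᵀΣy - xᵀΘy` (symmetry of `Σ` and antisymmetry of `Θ` kill the imaginary part),
so `S ≻ 0` says that this real form is positive for `(x, y) ≠ 0`; taking `y = 0` gives `Σ ≻ 0`.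
The substitution `x = Σ^{-1/2} u`, `y = Σ^{-1/2} v` turns the condition into
`2 uᵀΞv < ‖u‖² + ‖v‖²`. By Cauchy–Schwarz and AM–GM this follows from `‖Ξ‖ < 1`; conversely,
taking `u = Ξ v` for a unit vector `v` at which `‖Ξ v‖ = ‖Ξ‖` gives `‖Ξ‖² < 1`.
-/

open Matrix ComplexOrder

/-- The spectral (operator) norm of a real `n × n` matrix `M`, i.e. the
operator norm of the induced map on Euclidean space, equal to
`sqrt(λ_max(MᵀM))`. -/
noncomputable def specNorm {n : ℕ} (M : Matrix (Fin n) (Fin n) ℝ) : ℝ :=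
  ‖Matrix.toEuclideanCLM (𝕜 := ℝ) M‖

/-- The positive semidefinite square root of a positive semidefinite matrix, as defined in
the older Mathlib (`Matrix.PosSemidef.sqrt`, since removed). -/
noncomputable def Matrix.PosSemidef.sqrt {n 𝕜 : Type*} [Fintype n] [DecidableEq n] [RCLike 𝕜]
    {A : Matrix n n 𝕜} (hA : A.PosSemidef) : Matrix n n 𝕜 :=
  hA.1.eigenvectorUnitary.1 * diagonal ((↑) ∘ (√·) ∘ hA.1.eigenvalues) *
    (star hA.1.eigenvectorUnitary : Matrix n n 𝕜)

open scoped RealInnerProductSpace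

namespace ContinuousLinearMap

theorem exists_mem_sphere_norm_apply_eq_opNorm {𝕜 E F : Type*} [RCLike 𝕜]
    [NormedAddCommGroup E] [NormedSpace 𝕜 E] [FiniteDimensional 𝕜 E] [Nontrivial E]
    [SeminormedAddCommGroup F] [NormedSpace 𝕜 F] (T : E →L[𝕜] F) :
    ∃ v ∈ Metric.sphere (0 : E) 1, ‖T v‖ = ‖T‖ := by
  have := FiniteDimensional.proper_rclike 𝕜 E
  obtain ⟨v, hv, hmax⟩ := (isCompact_sphere (0 : E) 1).exists_isMaxOn
    (Set.nonempty_coe_sort.1 (NormedSpace.sphere_nonempty_rclike 𝕜 zero_le_one))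
    (continuous_norm.comp T.continuous).continuousOn
  have hv1 : ‖v‖ = 1 := by simpa using hv
  refine ⟨v, hv, le_antisymm ?_ ?_⟩
  · simpa [hv1] using T.le_opNorm v
  · exact T.opNorm_le_of_unit_norm (norm_nonneg _) fun x hx => hmax (by simpa using hx)

theorem opNorm_lt_one_iff_forall_two_inner_lt {E : Type*} [NormedAddCommGroup E]
    [InnerProductSpace ℝ E] [FiniteDimensional ℝ E] (T : E →L[ℝ] E) :
    ‖T‖ < 1 ↔ ∀ x y : E, (x ≠ 0 ∨ y ≠ 0) → 2 * ⟪x, T y⟫ < ‖x‖ ^ 2 + ‖y‖ ^ 2 := by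
  constructor
  · intro hT x y hxy
    have hpos : 0 < ‖x‖ ^ 2 + ‖y‖ ^ 2 := by
      rcases hxy with hx | hy
      · have := norm_pos_iff.2 hx; positivity
      · have := norm_pos_iff.2 hy; positivity
    calc 2 * ⟪x, T y⟫ ≤ 2 * (‖x‖ * (‖T‖ * ‖y‖)) := by
          gcongr
          exact (real_inner_le_norm x (T y)).trans (by gcongr; exact T.le_opNorm y)
      _ ≤ ‖T‖ * (‖x‖ ^ 2 + ‖y‖ ^ 2) := by
          nlinarith [sq_nonneg (‖x‖ - ‖y‖), norm_nonneg T]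
      _ < ‖x‖ ^ 2 + ‖y‖ ^ 2 := by nlinarith
  · intro h
    rcases subsingleton_or_nontrivial E with hE | hE
    · simp [Subsingleton.elim T 0]
    obtain ⟨v, hv, hTv⟩ := T.exists_mem_sphere_norm_apply_eq_opNorm
    rw [mem_sphere_zero_iff_norm] at hv
    have := h (T v) v (Or.inr (ne_zero_of_norm_ne_zero (by simp [hv])))
    rw [real_inner_self_eq_norm_sq, hv, hTv] at this
    nlinarith [norm_nonneg T]

end ContinuousLinearMap

theorem specNorm_lt_one_iff {n : ℕ} (M : Matrix (Fin n) (Fin n) ℝ) :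
    specNorm M < 1 ↔
      ∀ u v : Fin n → ℝ, (u ≠ 0 ∨ v ≠ 0) → 2 * (u ⬝ᵥ M *ᵥ v) < u ⬝ᵥ u + v ⬝ᵥ v := by
  have hnorm (u : Fin n → ℝ) : ‖WithLp.toLp 2 u‖ ^ 2 = u ⬝ᵥ u := by
    rw [← real_inner_self_eq_norm_sq, EuclideanSpace.inner_toLp_toLp, star_trivial]
  rw [specNorm, ContinuousLinearMap.opNorm_lt_one_iff_forall_two_inner_lt]
  refine ⟨fun h u v huv => ?_, fun h x y hxy => ?_⟩
  · have := h (WithLp.toLp 2 u) (WithLp.toLp 2 v) (by simpa using huv)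
    rwa [inner_toEuclideanCLM, hnorm, hnorm] at this
  · have := h x.ofLp y.ofLp (by simpa using hxy)
    rwa [← inner_toEuclideanCLM, ← hnorm, ← hnorm] at this

namespace Matrix

section Sqrt

open scoped MatrixOrder

variable {ι 𝕜 : Type*} [Fintype ι] [DecidableEq ι] [RCLike 𝕜] {A : Matrix ι ι 𝕜}

theorem PosSemidef.sqrt_eq_cfcSqrt (hA : A.PosSemidef) : hA.sqrt = CFC.sqrt A := by
  rw [CFC.sqrt_eq_real_sqrt A hA.nonneg, cfcₙ_eq_cfc, hA.1.cfc_eq]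
  rfl

theorem PosSemidef.sqrt_mul_sqrt (hA : A.PosSemidef) : hA.sqrt * hA.sqrt = A := by
  rw [hA.sqrt_eq_cfcSqrt, CFC.sqrt_mul_sqrt_self A hA.nonneg]

theorem PosSemidef.isHermitian_sqrt (hA : A.PosSemidef) : hA.sqrt.IsHermitian := by
  rw [hA.sqrt_eq_cfcSqrt]
  exact (CFC.sqrt_nonneg A).isSelfAdjoint

theorem PosDef.isUnit_sqrt (hA : A.PosDef) : IsUnit hA.posSemidef.sqrt := by
  rw [hA.posSemidef.sqrt_eq_cfcSqrt, CFC.isUnit_sqrt_iff A hA.posSemidef.nonneg]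
  exact hA.isUnit

theorem PosDef.inv_sqrt_mul_mul_inv_sqrt (hA : A.PosDef) :
    hA.posSemidef.sqrt⁻¹ * A * hA.posSemidef.sqrt⁻¹ = 1 := by
  have hdet := (isUnit_iff_isUnit_det _).1 hA.isUnit_sqrt
  calc hA.posSemidef.sqrt⁻¹ * A * hA.posSemidef.sqrt⁻¹
      = hA.posSemidef.sqrt⁻¹ * (hA.posSemidef.sqrt * hA.posSemidef.sqrt) *
          hA.posSemidef.sqrt⁻¹ := by rw [hA.posSemidef.sqrt_mul_sqrt]
    _ = 1 := by
      rw [← Matrix.mul_assoc, nonsing_inv_mul _ hdet, Matrix.one_mul, mul_nonsing_inv _ hdet]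

end Sqrt

section QuantumCovariance

variable {ι : Type*}

noncomputable def quantumCovariance (Sgm Θ : Matrix ι ι ℝ) : Matrix ι ι ℂ :=
  Sgm.map Complex.ofReal + (Complex.I / 2) • Θ.map Complex.ofReal

theorem isHermitian_quantumCovariance {Sgm Θ : Matrix ι ι ℝ} (hSgm : Sgm.IsSymm)
    (hΘ : Θᵀ = -Θ) : (quantumCovariance Sgm Θ).IsHermitian := by
  have hmap (A : Matrix ι ι ℝ) : (A.map Complex.ofReal)ᴴ = Aᵀ.map Complex.ofReal := by
    rw [← conjTranspose_map _ fun a => (Complex.conj_ofReal a).symm,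
      conjTranspose_eq_transpose_of_trivial]
  rw [IsHermitian, quantumCovariance, conjTranspose_add, conjTranspose_smul, hmap, hmap,
    hSgm.eq, hΘ]
  simp [Matrix.map_neg, neg_div]

variable [Fintype ι]

theorem star_dotProduct_map_ofReal_mulVec (M : Matrix ι ι ℝ) (x y : ι → ℝ) :
    star (fun i => (⟨x i, y i⟩ : ℂ)) ⬝ᵥ M.map Complex.ofReal *ᵥ (fun i => ⟨x i, y i⟩) =
      ↑(x ⬝ᵥ M *ᵥ x + y ⬝ᵥ M *ᵥ y) + Complex.I * ↑(x ⬝ᵥ M *ᵥ y - y ⬝ᵥ M *ᵥ x) := by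
  apply Complex.ext <;>
    simp [dotProduct, mulVec, Complex.re_sum, Complex.im_sum, Finset.mul_sum,
      Finset.sum_add_distrib, sub_eq_add_neg]

theorem star_dotProduct_quantumCovariance_mulVec {Sgm Θ : Matrix ι ι ℝ} (hSgm : Sgm.IsSymm)
    (hΘ : Θᵀ = -Θ) (x y : ι → ℝ) :
    star (fun i => (⟨x i, y i⟩ : ℂ)) ⬝ᵥ quantumCovariance Sgm Θ *ᵥ (fun i => ⟨x i, y i⟩) =
      ↑(x ⬝ᵥ Sgm *ᵥ x + y ⬝ᵥ Sgm *ᵥ y - x ⬝ᵥ Θ *ᵥ y) := by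
  have hSgm_swap : y ⬝ᵥ Sgm *ᵥ x = x ⬝ᵥ Sgm *ᵥ y := by
    rw [← dotProduct_transpose_mulVec, hSgm.eq]
  have hΘ_swap (u v : ι → ℝ) : v ⬝ᵥ Θ *ᵥ u = -(u ⬝ᵥ Θ *ᵥ v) := by
    rw [← dotProduct_transpose_mulVec, hΘ, neg_mulVec, dotProduct_neg]
  have hΘ_self (u : ι → ℝ) : u ⬝ᵥ Θ *ᵥ u = 0 := by linarith [hΘ_swap u u]
  rw [quantumCovariance, add_mulVec, dotProduct_add, smul_mulVec, dotProduct_smul, smul_eq_mul,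
    star_dotProduct_map_ofReal_mulVec, star_dotProduct_map_ofReal_mulVec, hSgm_swap,
    hΘ_swap x y, hΘ_self, hΘ_self]
  apply Complex.ext
  · simp; ring
  · simp

theorem posDef_quantumCovariance_iff {Sgm Θ : Matrix ι ι ℝ} (hSgm : Sgm.IsSymm)
    (hΘ : Θᵀ = -Θ) :
    (quantumCovariance Sgm Θ).PosDef ↔
      ∀ x y : ι → ℝ, (x ≠ 0 ∨ y ≠ 0) → x ⬝ᵥ Θ *ᵥ y < x ⬝ᵥ Sgm *ᵥ x + y ⬝ᵥ Sgm *ᵥ y := by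
  rw [posDef_iff_dotProduct_mulVec, and_iff_right (isHermitian_quantumCovariance hSgm hΘ)]
  have hne (x y : ι → ℝ) : (fun i => (⟨x i, y i⟩ : ℂ)) ≠ 0 ↔ x ≠ 0 ∨ y ≠ 0 := by
    rw [Ne, ← not_and_or, not_iff_not]
    simp [funext_iff, Complex.ext_iff, forall_and]
  refine ⟨fun h x y hxy => ?_, fun h z hz => ?_⟩
  · have := h ((hne x y).2 hxy)
    rwa [star_dotProduct_quantumCovariance_mulVec hSgm hΘ, Complex.zero_lt_real, sub_pos] at this
  · have hz_eta : z = fun i => ⟨(z i).re, (z i).im⟩ := rfl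
    rw [hz_eta, star_dotProduct_quantumCovariance_mulVec hSgm hΘ, Complex.zero_lt_real, sub_pos]
    exact h _ _ ((hne _ _).1 hz)

end QuantumCovariance

theorem forall_dotProduct_mulVec_lt_iff_of_transpose_mul_mul_eq_one {ι : Type*} [Fintype ι]
    [DecidableEq ι] {R Sgm : Matrix ι ι ℝ} (Θ : Matrix ι ι ℝ) (hR : IsUnit R)
    (hRSgmR : Rᵀ * Sgm * R = 1) :
    (∀ x y : ι → ℝ, (x ≠ 0 ∨ y ≠ 0) → x ⬝ᵥ Θ *ᵥ y < x ⬝ᵥ Sgm *ᵥ x + y ⬝ᵥ Sgm *ᵥ y) ↔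
      ∀ u v : ι → ℝ, (u ≠ 0 ∨ v ≠ 0) → u ⬝ᵥ (Rᵀ * Θ * R) *ᵥ v < u ⬝ᵥ u + v ⬝ᵥ v := by
  have hsubst (A : Matrix ι ι ℝ) (u v : ι → ℝ) :
      R *ᵥ u ⬝ᵥ A *ᵥ (R *ᵥ v) = u ⬝ᵥ (Rᵀ * A * R) *ᵥ v := by
    rw [dotProduct_comm, ← dotProduct_transpose_mulVec, Matrix.mul_assoc, ← mulVec_mulVec,
      ← mulVec_mulVec]
  have hzero (u : ι → ℝ) : R *ᵥ u = 0 ↔ u = 0 :=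
    (mulVec_injective_iff_isUnit.2 hR).eq_iff' (mulVec_zero R)
  rw [(mulVec_surjective_iff_isUnit.2 hR).forall₂]
  simp only [hsubst, hRSgmR, one_mulVec, ne_eq, hzero]

end Matrix

theorem specNorm_half_inv_sqrt_mul_mul_inv_sqrt_lt_one_iff {n : ℕ}
    {Sgm : Matrix (Fin n) (Fin n) ℝ} (hSgm : Sgm.PosDef) (Θ : Matrix (Fin n) (Fin n) ℝ) :
    specNorm ((1 / 2 : ℝ) •
        (hSgm.posSemidef.sqrt⁻¹ * Θ * hSgm.posSemidef.sqrt⁻¹)) < 1 ↔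
      ∀ x y : Fin n → ℝ, (x ≠ 0 ∨ y ≠ 0) → x ⬝ᵥ Θ *ᵥ y < x ⬝ᵥ Sgm *ᵥ x + y ⬝ᵥ Sgm *ᵥ y := by
  have hRt : hSgm.posSemidef.sqrt⁻¹ᵀ = hSgm.posSemidef.sqrt⁻¹ := by
    rw [transpose_nonsing_inv, ← conjTranspose_eq_transpose_of_trivial,
      hSgm.posSemidef.isHermitian_sqrt.eq]
  have hRSgmR := hSgm.inv_sqrt_mul_mul_inv_sqrt
  have hR := isUnit_nonsing_inv_iff.2 hSgm.isUnit_sqrt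
  generalize hSgm.posSemidef.sqrt⁻¹ = R at hRt hRSgmR hR ⊢
  rw [forall_dotProduct_mulVec_lt_iff_of_transpose_mul_mul_eq_one Θ hR (by rwa [hRt]), hRt,
    specNorm_lt_one_iff]
  have hhalf (a : ℝ) : 2 * ((1 / 2) * a) = a := by ring
  simp only [smul_mulVec, dotProduct_smul, smul_eq_mul, hhalf]

theorem quantum_covariance_posdef_iff_contraction_general
    {n : ℕ}
    (Sgm Θ : Matrix (Fin n) (Fin n) ℝ)
    (hSgmSymm : Sgm.IsSymm) (hΘ : Θᵀ = -Θ) :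
    (Sgm.map (Complex.ofReal) +
      (Complex.I / 2) • Θ.map (Complex.ofReal)).PosDef ↔
    ∃ hSgmPd : Sgm.PosDef,
      specNorm ((1 / 2 : ℝ) •
        ((Matrix.PosSemidef.sqrt hSgmPd.posSemidef)⁻¹ * Θ * (Matrix.PosSemidef.sqrt hSgmPd.posSemidef)⁻¹)) < 1 := by
  rw [← quantumCovariance, posDef_quantumCovariance_iff hSgmSymm hΘ]
  refine ⟨fun h => ?_, fun ⟨hSgmPd, hΞ⟩ =>
    (specNorm_half_inv_sqrt_mul_mul_inv_sqrt_lt_one_iff hSgmPd Θ).1 hΞ⟩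
  have hSgmPd : Sgm.PosDef :=
    .of_dotProduct_mulVec_pos (isHermitian_iff_isSymm.2 hSgmSymm) fun x hx => by
      simpa using h x 0 (.inl hx)
  exact ⟨hSgmPd, (specNorm_half_inv_sqrt_mul_mul_inv_sqrt_lt_one_iff hSgmPd Θ).2 h⟩

/-- Appendix C of the paper: the complex Hermitian matrix `S = Σ + (i/2)Θ`
(with `Σ` real symmetric, `Θ` real antisymmetric) is positive definite if and
only if `Σ` is positive definite and the matrix
`Ξ = (1/2) Σ^{−1/2} Θ Σ^{−1/2}` is a strict contraction in the spectral norm,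
where `Σ^{1/2}` is the unique positive semidefinite square root of `Σ`. -/
theorem quantum_covariance_posdef_iff_contraction
    {n : ℕ} (hn : 1 ≤ n)
    (Sgm Θ : Matrix (Fin n) (Fin n) ℝ)
    (hSgmSymm : Sgm.IsSymm) (hΘ : Θᵀ = -Θ) :
    (Sgm.map (Complex.ofReal) +
      (Complex.I / 2) • Θ.map (Complex.ofReal)).PosDef ↔
    ∃ hSgmPd : Sgm.PosDef,
      specNorm ((1 / 2 : ℝ) •
        ((Matrix.PosSemidef.sqrt hSgmPd.posSemidef)⁻¹ * Θ * (Matrix.PosSemidef.sqrt hSgmPd.posSemidef)⁻¹)) < 1 :=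
  quantum_covariance_posdef_iff_contraction_general Sgm Θ hSgmSymm hΘ
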